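/- Let φ : Z → ℝⁿ and χ : Z → ℝᵖ be C^∞ maps on an open set Z ⊆ ℝᵐ, with Dφ(z) injective for every z ∈ Z. Let a₀ ∈ ℝⁿ and z₀ ∈ Z satisfy Dφ(z₀)ᵀ(a₀ − φ(z₀)) = 0, and assume the Hessian H of d_{a₀}(z) := ½‖a₀ − φ(z)‖² at z₀ is invertible. Then there exist open neighborhoods A ⊆ ℝⁿ of a₀ and Z′ ⊆ Z of z₀ and a C^∞ map ζ : A → Z′ with ζ(a₀) = z₀ such that: (i) for every a ∈ A, ζ(a) is the unique z ∈ Z′ with Dφ(z)ᵀ(a − φ(z)) = 0; (ii) the solution map y := χ ∘ ζ satisfies Dy(a₀) = Dχ(z₀) H⁻¹ Dφ(z₀)ᵀ; and (iii) lim_{ε→0⁺} sup{ ‖y(a) − y(a₀)‖/‖a − a₀‖ : a ∈ A, 0 < ‖a − a₀‖ ≤ ε } = ‖Dχ(z₀) H⁻¹ Dφ(z₀)ᵀ‖. -/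

import Mathlib

/-!
The critical points are the zeros of `criticalPointMap φ (a, z) = Dφ(z)ᵀ (a - φ z)`, which is minus
the gradient of `d_a z = ½ ‖a - φ z‖²`. Differentiating this gradient identity shows that the
partial derivative of this map in `z` at `(a₀, z₀)` is `-H`, while its partial derivative in `a`
is `Dφ(z₀)ᵀ`. The implicit function theorem then yields a smooth local solution map `ζ` with
`Dζ(a₀) = H⁻¹ Dφ(z₀)ᵀ`, and the chain rule gives `Dy(a₀)`. Finally, for any map differentiable
at `a₀`, the supremum of the difference quotients over the ball of radius `ε` tends to the
operator norm of the derivative: it is bounded above by the first-order Taylor estimate and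
bounded below along a direction where the derivative almost attains its norm.
-/

open Filter Topology
open scoped RealInnerProductSpace

noncomputable section

section Rice

variable {E F : Type*} [NormedAddCommGroup E] [NormedSpace ℝ E]
  [NormedAddCommGroup F] [NormedSpace ℝ F]

def riceQuotients (g : E → F) (A : Set E) (a₀ : E) (ε : ℝ) : Set ℝ :=
  {q | ∃ a ∈ A, 0 < ‖a - a₀‖ ∧ ‖a - a₀‖ ≤ ε ∧ q = ‖g a - g a₀‖ / ‖a - a₀‖}

variable {g : E → F} {L : E →L[ℝ] F} {A : Set E} {a₀ : E} {ε δ : ℝ}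

lemma HasFDerivAt.eventually_forall_norm_sub_le (hg : HasFDerivAt g L a₀) (hA : A ∈ 𝓝 a₀)
    (hδ : 0 < δ) :
    ∀ᶠ ε in 𝓝[>] 0, ∀ a, ‖a - a₀‖ ≤ ε →
      a ∈ A ∧ ‖g a - g a₀ - L (a - a₀)‖ ≤ δ * ‖a - a₀‖ := by
  obtain ⟨r, hr, hball⟩ := Metric.eventually_nhds_iff.1 (inter_mem hA (hg.isLittleO.def hδ))
  filter_upwards [Ioo_mem_nhdsGT hr] with ε hε a ha
  exact hball (by rw [dist_eq_norm]; exact ha.trans_lt hε.2)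

lemma le_of_mem_riceQuotients
    (hε : ∀ a, ‖a - a₀‖ ≤ ε → ‖g a - g a₀ - L (a - a₀)‖ ≤ δ * ‖a - a₀‖) :
    ∀ q ∈ riceQuotients g A a₀ ε, q ≤ ‖L‖ + δ := by
  rintro q ⟨a, -, hpos, hle, rfl⟩
  rw [div_le_iff₀ hpos]
  calc ‖g a - g a₀‖ ≤ ‖L (a - a₀)‖ + ‖g a - g a₀ - L (a - a₀)‖ := norm_le_insert' _ _
    _ ≤ ‖L‖ * ‖a - a₀‖ + δ * ‖a - a₀‖ := add_le_add (L.le_opNorm _) (hε a hle)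
    _ = (‖L‖ + δ) * ‖a - a₀‖ := by ring

lemma exists_mem_riceQuotients_ge (hε₀ : 0 < ε)
    (hε : ∀ a, ‖a - a₀‖ ≤ ε → a ∈ A ∧ ‖g a - g a₀ - L (a - a₀)‖ ≤ δ * ‖a - a₀‖)
    {x : E} (hx : x ≠ 0) :
    ∃ q ∈ riceQuotients g A a₀ ε, ‖L x‖ / ‖x‖ - δ ≤ q := by
  have hx' : 0 < ‖x‖ := norm_pos_iff.2 hx
  set t := ε / ‖x‖
  have ht : 0 < t := div_pos hε₀ hx'
  have hnorm : ‖(a₀ + t • x) - a₀‖ = ε := by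
    rw [add_sub_cancel_left, norm_smul, Real.norm_of_nonneg ht.le, div_mul_cancel₀ _ hx'.ne']
  obtain ⟨haA, hest⟩ := hε (a₀ + t • x) hnorm.le
  refine ⟨_, ⟨_, haA, hnorm ▸ hε₀, hnorm.le, rfl⟩, ?_⟩
  rw [hnorm, le_div_iff₀ hε₀]
  rw [hnorm, add_sub_cancel_left] at hest
  have hLx : ‖L (t • x)‖ = ‖L x‖ / ‖x‖ * ε := by
    rw [map_smul, norm_smul, Real.norm_of_nonneg ht.le]; ring
  calc (‖L x‖ / ‖x‖ - δ) * ε = ‖L (t • x)‖ - δ * ε := by rw [hLx]; ring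
    _ ≤ ‖g (a₀ + t • x) - g a₀‖ := by
      linarith [norm_sub_norm_le (L (t • x)) (g (a₀ + t • x) - g a₀),
        norm_sub_rev (L (t • x)) (g (a₀ + t • x) - g a₀)]

theorem HasFDerivAt.tendsto_sSup_riceQuotients (hg : HasFDerivAt g L a₀) (hA : A ∈ 𝓝 a₀) :
    Tendsto (fun ε => sSup (riceQuotients g A a₀ ε)) (𝓝[>] 0) (𝓝 ‖L‖) := by
  refine tendsto_order.2 ⟨fun b hb => ?_, fun b hb => ?_⟩
  · have hδ : 0 < (‖L‖ - b) / 2 := by linarith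
    filter_upwards [self_mem_nhdsWithin, hg.eventually_forall_norm_sub_le hA hδ]
      with ε hε₀ hε
    have hnonneg : 0 ≤ sSup (riceQuotients g A a₀ ε) := Real.sSup_nonneg <| by
      rintro q ⟨a, -, -, -, rfl⟩; positivity
    rcases lt_or_ge b 0 with hb0 | hb0
    · linarith
    obtain ⟨x, hx1, hLx⟩ := L.exists_lt_apply_of_lt_opNorm
      (show ‖L‖ - (‖L‖ - b) / 2 < ‖L‖ by linarith)
    have hx : x ≠ 0 := by rintro rfl; simp at hLx; linarith
    obtain ⟨q, hq, hxq⟩ := exists_mem_riceQuotients_ge hε₀ hε hx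
    have hbdd : BddAbove (riceQuotients g A a₀ ε) :=
      ⟨_, le_of_mem_riceQuotients fun a ha => (hε a ha).2⟩
    have hratio : ‖L x‖ ≤ ‖L x‖ / ‖x‖ :=
      le_div_self (norm_nonneg _) (norm_pos_iff.2 hx) hx1.le
    linarith [le_csSup hbdd hq]
  · have hδ : 0 < (b - ‖L‖) / 2 := by linarith
    filter_upwards [hg.eventually_forall_norm_sub_le hA hδ] with ε hε
    calc sSup (riceQuotients g A a₀ ε) ≤ ‖L‖ + (b - ‖L‖) / 2 :=
          Real.sSup_le (le_of_mem_riceQuotients fun a ha => (hε a ha).2) (by positivity)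
      _ < b := by linarith

end Rice

section Implicit

variable {𝕜 : Type*} [RCLike 𝕜]
  {E₁ : Type*} [NormedAddCommGroup E₁] [NormedSpace 𝕜 E₁]
  {E₂ : Type*} [NormedAddCommGroup E₂] [NormedSpace 𝕜 E₂] [CompleteSpace E₂]
  {F : Type*} [NormedAddCommGroup F] [NormedSpace 𝕜 F]
  {f : E₁ × E₂ → F} {s : Set (E₁ × E₂)} {n : WithTop ℕ∞}

lemma ContDiffOn.isOpen_inter_setOf_isInvertible_comp_inr (hf : ContDiffOn 𝕜 n f s)
    (hs : IsOpen s) (hn : 1 ≤ n) :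
    IsOpen (s ∩ {v | (fderiv 𝕜 f v ∘L .inr 𝕜 E₁ E₂).IsInvertible}) :=
  ((ContinuousLinearMap.precomp F (.inr 𝕜 E₁ E₂)).continuous.comp_continuousOn
    (hf.continuousOn_fderiv_of_isOpen hs hn)).isOpen_inter_preimage hs ContinuousLinearEquiv.isOpen

variable [CompleteSpace E₁] [CompleteSpace F]

/- Mathlib's implicit function is only `C^n` at the base point, and for `n = ∞` this does not
spread to a neighbourhood; local uniqueness of solutions lets us rerun the theorem at each
nearby point instead. -/
lemma contDiffAt_of_eventually_apply_eq {ψ : E₁ → E₂} {a : E₁} (hψ : ContinuousAt ψ a)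
    (hf : ContDiffAt 𝕜 n f (a, ψ a)) (hn : n ≠ 0)
    (hinv : (fderiv 𝕜 f (a, ψ a) ∘L .inr 𝕜 E₁ E₂).IsInvertible)
    (heq : ∀ᶠ x in 𝓝 a, f (x, ψ x) = f (a, ψ a)) :
    ContDiffAt 𝕜 n ψ a := by
  have hgraph : Tendsto (fun x => (x, ψ x)) (𝓝 a) (𝓝 (a, ψ a)) :=
    continuousAt_id.prodMk hψ
  have hψ_eq : hf.implicitFunction hn hinv =ᶠ[𝓝 a] ψ := by
    filter_upwards [heq, hgraph.eventually (hf.eventually_apply_eq_iff_implicitFunction hn hinv)]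
      with x hx hiff using hiff.1 hx
  exact (hf.contDiffAt_implicitFunction hn hinv).congr_of_eventuallyEq hψ_eq.symm

theorem exists_contDiffOn_implicitFunction {u : E₁ × E₂} (hf : ContDiffOn 𝕜 n f s)
    (hs : IsOpen s) (hn : 1 ≤ n) (hu : u ∈ s)
    (hinv : (fderiv 𝕜 f u ∘L .inr 𝕜 E₁ E₂).IsInvertible) :
    ∃ (A : Set E₁) (B : Set E₂) (ψ : E₁ → E₂), IsOpen A ∧ u.1 ∈ A ∧ IsOpen B ∧
      A ×ˢ B ⊆ s ∧ ContDiffOn 𝕜 n ψ A ∧ ψ u.1 = u.2 ∧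
      (∀ a ∈ A, ψ a ∈ B ∧ ∀ z ∈ B, f (a, z) = f u ↔ z = ψ a) ∧
      HasFDerivAt ψ
        (-(fderiv 𝕜 f u ∘L .inr 𝕜 E₁ E₂).inverse ∘L (fderiv 𝕜 f u ∘L .inl 𝕜 E₁ E₂)) u.1 := by
  have hn₀ : n ≠ 0 := (zero_lt_one.trans_le hn).ne'
  have hfu : ContDiffAt 𝕜 n f u := hf.contDiffAt (hs.mem_nhds hu)
  have hψu := hfu.implicitFunction_apply_self hn₀ hinv
  have hψiff := hfu.eventually_apply_eq_iff_implicitFunction hn₀ hinv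
  have hψsmooth := hfu.contDiffAt_implicitFunction hn₀ hinv
  have hψderiv := (hfu.hasStrictFDerivAt_implicitFunction hn₀ hinv).hasFDerivAt
  generalize hfu.implicitFunction hn₀ hinv = ψ at hψu hψiff hψsmooth hψderiv
  have hW : s ∩ {v | (fderiv 𝕜 f v ∘L .inr 𝕜 E₁ E₂).IsInvertible} ∈ 𝓝 u :=
    (hf.isOpen_inter_setOf_isInvertible_comp_inr hs hn).mem_nhds ⟨hu, hinv⟩
  obtain ⟨A₁, B, hA₁, hu₁, hB, hu₂, hbox⟩ := mem_nhds_prod_iff'.1 (inter_mem hW hψiff)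
  have hψcont : ∀ᶠ x in 𝓝 u.1, ContinuousAt ψ x :=
    (hψsmooth.of_le hn).eventually (by simp)
      |>.mono fun x hx => hx.continuousAt
  have hψB : ∀ᶠ x in 𝓝 u.1, ψ x ∈ B :=
    hψsmooth.continuousAt.preimage_mem_nhds
      (by rw [hψu]; exact hB.mem_nhds hu₂)
  obtain ⟨A, hAsub, hA, huA⟩ := mem_nhds_iff.1
    (inter_mem (hA₁.mem_nhds hu₁) (inter_mem hψB hψcont))
  have hiff : ∀ a ∈ A, ∀ z ∈ B, f (a, z) = f u ↔ z = ψ a := fun a ha z hz =>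
    (hbox (Set.mk_mem_prod (hAsub ha).1 hz)).2.trans eq_comm
  have hsol : ∀ a ∈ A, f (a, ψ a) = f u := fun a ha =>
    (hiff a ha _ (hAsub ha).2.1).2 rfl
  refine ⟨A, B, ψ, hA, huA, hB, fun v hv => (hbox ⟨(hAsub hv.1).1, hv.2⟩).1.1,
    fun a ha => ?_, hψu, fun a ha => ⟨(hAsub ha).2.1, hiff a ha⟩,
    hψderiv⟩
  have hmem := (hbox (Set.mk_mem_prod (hAsub ha).1 (hAsub ha).2.1)).1
  refine (contDiffAt_of_eventually_apply_eq (hAsub ha).2.2 (hf.contDiffAt (hs.mem_nhds hmem.1))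
    hn₀ hmem.2 ?_).contDiffWithinAt
  filter_upwards [hA.mem_nhds ha] with x hx
  rw [hsol x hx, hsol a ha]

end Implicit

section CriticalPoint

variable {E F : Type*} [NormedAddCommGroup E] [InnerProductSpace ℝ E] [CompleteSpace E]
  [NormedAddCommGroup F] [InnerProductSpace ℝ F] [CompleteSpace F]

lemma isBoundedLinearMap_adjoint :
    IsBoundedLinearMap ℝ (ContinuousLinearMap.adjoint : (E →L[ℝ] F) → F →L[ℝ] E) :=
  IsLinearMap.with_bound ⟨map_add _, fun r A => by simp [ContinuousLinearMap.adjoint.map_smulₛₗ]⟩ 1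
    fun A => by simp

def criticalPointMap (φ : E → F) (q : F × E) : E :=
  ContinuousLinearMap.adjoint (fderiv ℝ φ q.2) (q.1 - φ q.2)

variable {φ : E → F} {Z : Set E}

lemma ContDiffOn.criticalPointMap {n : WithTop ℕ∞} (hφ : ContDiffOn ℝ (n + 1) φ Z)
    (hZ : IsOpen Z) : ContDiffOn ℝ n (criticalPointMap φ) (Set.univ ×ˢ Z) := by
  have hsnd : Set.MapsTo Prod.snd (Set.univ ×ˢ Z : Set (F × E)) Z := fun q hq => hq.2
  refine ContDiffOn.clm_apply ?_ (contDiffOn_fst.sub ?_)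
  · exact isBoundedLinearMap_adjoint.contDiff.comp_contDiffOn
      ((hφ.fderiv_of_isOpen hZ le_rfl).comp contDiffOn_snd hsnd)
  · exact (hφ.of_le le_self_add).comp contDiffOn_snd hsnd

lemma hasFDerivAt_half_norm_sub_sq {a : F} {z : E} (hφ : DifferentiableAt ℝ φ z) :
    HasFDerivAt (fun z => (1 / 2 : ℝ) * ‖a - φ z‖ ^ 2)
      (-innerSL ℝ (criticalPointMap φ (a, z))) z := by
  have hres : HasFDerivAt (fun z => a - φ z) (-fderiv ℝ φ z) z := hφ.hasFDerivAt.const_sub a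
  refine (hres.norm_sq.const_mul (1 / 2 : ℝ)).congr_fderiv ?_
  ext w
  simp [criticalPointMap, ContinuousLinearMap.adjoint_inner_left]

lemma hasFDerivAt_criticalPointMap_right_of_hessian {a₀ : F} {z₀ : E} {H : E →L[ℝ] E}
    (hφ : ∀ᶠ z in 𝓝 z₀, DifferentiableAt ℝ φ z)
    (hG : DifferentiableAt ℝ (fun z => criticalPointMap φ (a₀, z)) z₀)
    (hH : ∀ v w, ⟪H v, w⟫ =
      fderiv ℝ (fderiv ℝ (fun z => (1 / 2 : ℝ) * ‖a₀ - φ z‖ ^ 2)) z₀ v w) :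
    HasFDerivAt (fun z => criticalPointMap φ (a₀, z)) (-H) z₀ := by
  have hgrad : fderiv ℝ (fun z => (1 / 2 : ℝ) * ‖a₀ - φ z‖ ^ 2) =ᶠ[𝓝 z₀]
      fun z => -innerSL ℝ (criticalPointMap φ (a₀, z)) :=
    hφ.mono fun z hz => (hasFDerivAt_half_norm_sub_sq hz).fderiv
  have hhess : fderiv ℝ (fderiv ℝ (fun z => (1 / 2 : ℝ) * ‖a₀ - φ z‖ ^ 2)) z₀ =
      -(innerSL ℝ ∘L fderiv ℝ (fun z => criticalPointMap φ (a₀, z)) z₀) := by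
    rw [hgrad.fderiv_eq]
    exact ((innerSL ℝ).hasFDerivAt.comp z₀ hG.hasFDerivAt).neg.fderiv
  convert hG.hasFDerivAt using 1
  ext v : 1
  refine ext_inner_right ℝ fun w => ?_
  rw [neg_apply, inner_neg_left, hH, hhess]
  exact neg_neg _

lemma fderiv_criticalPointMap_comp_inr {a₀ : F} {z₀ : E} {H : E →L[ℝ] E}
    (hf : DifferentiableAt ℝ (criticalPointMap φ) (a₀, z₀))
    (hφ : ∀ᶠ z in 𝓝 z₀, DifferentiableAt ℝ φ z)
    (hH : ∀ v w, ⟪H v, w⟫ =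
      fderiv ℝ (fderiv ℝ (fun z => (1 / 2 : ℝ) * ‖a₀ - φ z‖ ^ 2)) z₀ v w) :
    fderiv ℝ (criticalPointMap φ) (a₀, z₀) ∘L .inr ℝ F E = -H := by
  have hG := hf.hasFDerivAt.comp z₀ (hasFDerivAt_prodMk_right a₀ z₀)
  exact hG.unique (hasFDerivAt_criticalPointMap_right_of_hessian hφ hG.differentiableAt hH)

lemma fderiv_criticalPointMap_comp_inl {a₀ : F} {z₀ : E}
    (hf : DifferentiableAt ℝ (criticalPointMap φ) (a₀, z₀)) :
    fderiv ℝ (criticalPointMap φ) (a₀, z₀) ∘L .inl ℝ F E =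
      ContinuousLinearMap.adjoint (fderiv ℝ φ z₀) := by
  have hT := (ContinuousLinearMap.adjoint (fderiv ℝ φ z₀)).hasFDerivAt.comp a₀
    ((hasFDerivAt_id a₀).sub_const (φ z₀))
  exact (hf.hasFDerivAt.comp a₀ (hasFDerivAt_prodMk_left a₀ z₀)).unique hT

theorem exists_contDiffOn_solution_criticalPointMap_eq_zero {n : WithTop ℕ∞} {a₀ : F} {z₀ : E}
    {H Hinv : E →L[ℝ] E} (hn : 1 ≤ n) (hZ : IsOpen Z) (hφ : ContDiffOn ℝ (n + 1) φ Z)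
    (hz₀ : z₀ ∈ Z) (hcrit : criticalPointMap φ (a₀, z₀) = 0)
    (hH : ∀ v w, ⟪H v, w⟫ =
      fderiv ℝ (fderiv ℝ (fun z => (1 / 2 : ℝ) * ‖a₀ - φ z‖ ^ 2)) z₀ v w)
    (hHinv₁ : H ∘L Hinv = .id ℝ E) (hHinv₂ : Hinv ∘L H = .id ℝ E) :
    ∃ (A : Set F) (Z' : Set E) (ζ : F → E), IsOpen A ∧ a₀ ∈ A ∧ IsOpen Z' ∧ Z' ⊆ Z ∧
      ContDiffOn ℝ n ζ A ∧ ζ a₀ = z₀ ∧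
      (∀ a ∈ A, ζ a ∈ Z' ∧ ∀ z ∈ Z', criticalPointMap φ (a, z) = 0 ↔ z = ζ a) ∧
      HasFDerivAt ζ (Hinv ∘L ContinuousLinearMap.adjoint (fderiv ℝ φ z₀)) a₀ := by
  have hs : IsOpen (Set.univ ×ˢ Z : Set (F × E)) := isOpen_univ.prod hZ
  have hu : (a₀, z₀) ∈ (Set.univ ×ˢ Z : Set (F × E)) := ⟨trivial, hz₀⟩
  have hf := hφ.criticalPointMap hZ
  have hfu : DifferentiableAt ℝ (criticalPointMap φ) (a₀, z₀) :=
    (hf.contDiffAt (hs.mem_nhds hu)).differentiableAt (zero_lt_one.trans_le hn).ne'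
  have hφdiff : ∀ᶠ z in 𝓝 z₀, DifferentiableAt ℝ φ z :=
    eventually_of_mem (hZ.mem_nhds hz₀) fun z hz =>
      (hφ.contDiffAt (hZ.mem_nhds hz)).differentiableAt (by simp)
  have hinr := fderiv_criticalPointMap_comp_inr hfu hφdiff hH
  have hneg₁ : (-H) ∘L (-Hinv) = .id ℝ E := by simpa using hHinv₁
  have hneg₂ : (-Hinv) ∘L (-H) = .id ℝ E := by simpa using hHinv₂
  obtain ⟨A, Z', ζ, hA, ha₀, hZ', hAZ', hζ, hζa₀, hsol, hζ'⟩ :=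
    exists_contDiffOn_implicitFunction hf hs hn hu
      (hinr ▸ ContinuousLinearMap.IsInvertible.of_inverse hneg₁ hneg₂)
  rw [hinr, fderiv_criticalPointMap_comp_inl hfu, ContinuousLinearMap.inverse_eq hneg₁ hneg₂,
    ContinuousLinearMap.neg_comp, neg_neg] at hζ'
  rw [hcrit] at hsol
  exact ⟨A, Z', ζ, hA, ha₀, hZ', fun z hz => (hAZ' (Set.mk_mem_prod ha₀ hz)).2, hζ, hζa₀,
    hsol, hζ'⟩

end CriticalPoint

theorem stmt_4_general {m n p : ℕ}
    (Z : Set (EuclideanSpace ℝ (Fin m))) (hZ : IsOpen Z)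
    (φ : EuclideanSpace ℝ (Fin m) → EuclideanSpace ℝ (Fin n))
    (χ : EuclideanSpace ℝ (Fin m) → EuclideanSpace ℝ (Fin p))
    (hφ : ContDiffOn ℝ (⊤ : ℕ∞) φ Z) (hχ : ContDiffOn ℝ (⊤ : ℕ∞) χ Z)
    (a₀ : EuclideanSpace ℝ (Fin n))
    (z₀ : EuclideanSpace ℝ (Fin m)) (hz₀ : z₀ ∈ Z)
    (hcrit : ContinuousLinearMap.adjoint (fderiv ℝ φ z₀) (a₀ - φ z₀) = 0)
    (H Hinv : EuclideanSpace ℝ (Fin m) →L[ℝ] EuclideanSpace ℝ (Fin m))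
    (hH : ∀ v w, ⟪H v, w⟫ =
      fderiv ℝ (fderiv ℝ (fun z => (1 / 2 : ℝ) * ‖a₀ - φ z‖ ^ 2)) z₀ v w)
    (hHinv₁ : H.comp Hinv = ContinuousLinearMap.id ℝ (EuclideanSpace ℝ (Fin m)))
    (hHinv₂ : Hinv.comp H = ContinuousLinearMap.id ℝ (EuclideanSpace ℝ (Fin m))) :
    ∃ (A : Set (EuclideanSpace ℝ (Fin n))) (Z' : Set (EuclideanSpace ℝ (Fin m)))
      (ζ : EuclideanSpace ℝ (Fin n) → EuclideanSpace ℝ (Fin m)),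
      IsOpen A ∧ a₀ ∈ A ∧ IsOpen Z' ∧ Z' ⊆ Z ∧ z₀ ∈ Z' ∧
      ContDiffOn ℝ (⊤ : ℕ∞) ζ A ∧ ζ a₀ = z₀ ∧
      (∀ a ∈ A, ζ a ∈ Z' ∧ ∀ z ∈ Z',
        (ContinuousLinearMap.adjoint (fderiv ℝ φ z) (a - φ z) = 0 ↔ z = ζ a)) ∧
      fderiv ℝ (fun a => χ (ζ a)) a₀ =
        ((fderiv ℝ χ z₀).comp Hinv).comp (ContinuousLinearMap.adjoint (fderiv ℝ φ z₀)) ∧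
      Tendsto (fun ε : ℝ => sSup {q : ℝ | ∃ a ∈ A, 0 < ‖a - a₀‖ ∧ ‖a - a₀‖ ≤ ε ∧
          q = ‖χ (ζ a) - χ (ζ a₀)‖ / ‖a - a₀‖}) (𝓝[>] (0 : ℝ))
        (𝓝 ‖((fderiv ℝ χ z₀).comp Hinv).comp (ContinuousLinearMap.adjoint (fderiv ℝ φ z₀))‖) := by
  obtain ⟨A, Z', ζ, hA, ha₀, hZ', hZ'Z, hζ, hζa₀, hsol, hζ'⟩ :=
    exists_contDiffOn_solution_criticalPointMap_eq_zero (n := (⊤ : ℕ∞)) (by simp) hZ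
      (hφ.of_le (by simp)) hz₀ hcrit hH hHinv₁ hHinv₂
  have hy : HasFDerivAt (fun a => χ (ζ a))
      (((fderiv ℝ χ z₀).comp Hinv).comp (ContinuousLinearMap.adjoint (fderiv ℝ φ z₀))) a₀ :=
    (hζa₀ ▸ ((hχ.contDiffAt (hZ.mem_nhds hz₀)).differentiableAt (by simp)).hasFDerivAt :
      HasFDerivAt χ (fderiv ℝ χ z₀) (ζ a₀)).comp a₀ hζ'
  exact ⟨A, Z', ζ, hA, ha₀, hZ', hZ'Z, hζa₀ ▸ (hsol a₀ ha₀).1, hζ, hζa₀, hsol, hy.fderiv,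
    hy.tendsto_sSup_riceQuotients (hA.mem_nhds ha₀)⟩

/-- Chart formulation of Theorem 6.2 (condition number of the generalized critical point
problem GCPP): local solution map of the critical point equation, its derivative and its
Rice condition number. -/
theorem stmt_4 {m n p : ℕ}
    (Z : Set (EuclideanSpace ℝ (Fin m))) (hZ : IsOpen Z)
    (φ : EuclideanSpace ℝ (Fin m) → EuclideanSpace ℝ (Fin n))
    (χ : EuclideanSpace ℝ (Fin m) → EuclideanSpace ℝ (Fin p))
    (hφ : ContDiffOn ℝ (⊤ : ℕ∞) φ Z) (hχ : ContDiffOn ℝ (⊤ : ℕ∞) χ Z)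
    (hinj : ∀ z ∈ Z, Function.Injective (fderiv ℝ φ z))
    (a₀ : EuclideanSpace ℝ (Fin n))
    (z₀ : EuclideanSpace ℝ (Fin m)) (hz₀ : z₀ ∈ Z)
    (hcrit : ContinuousLinearMap.adjoint (fderiv ℝ φ z₀) (a₀ - φ z₀) = 0)
    (H Hinv : EuclideanSpace ℝ (Fin m) →L[ℝ] EuclideanSpace ℝ (Fin m))
    (hH : ∀ v w, ⟪H v, w⟫ =
      fderiv ℝ (fderiv ℝ (fun z => (1 / 2 : ℝ) * ‖a₀ - φ z‖ ^ 2)) z₀ v w)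
    (hHinv₁ : H.comp Hinv = ContinuousLinearMap.id ℝ (EuclideanSpace ℝ (Fin m)))
    (hHinv₂ : Hinv.comp H = ContinuousLinearMap.id ℝ (EuclideanSpace ℝ (Fin m))) :
    ∃ (A : Set (EuclideanSpace ℝ (Fin n))) (Z' : Set (EuclideanSpace ℝ (Fin m)))
      (ζ : EuclideanSpace ℝ (Fin n) → EuclideanSpace ℝ (Fin m)),
      IsOpen A ∧ a₀ ∈ A ∧ IsOpen Z' ∧ Z' ⊆ Z ∧ z₀ ∈ Z' ∧
      ContDiffOn ℝ (⊤ : ℕ∞) ζ A ∧ ζ a₀ = z₀ ∧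
      (∀ a ∈ A, ζ a ∈ Z' ∧ ∀ z ∈ Z',
        (ContinuousLinearMap.adjoint (fderiv ℝ φ z) (a - φ z) = 0 ↔ z = ζ a)) ∧
      fderiv ℝ (fun a => χ (ζ a)) a₀ =
        ((fderiv ℝ χ z₀).comp Hinv).comp (ContinuousLinearMap.adjoint (fderiv ℝ φ z₀)) ∧
      Tendsto (fun ε : ℝ => sSup {q : ℝ | ∃ a ∈ A, 0 < ‖a - a₀‖ ∧ ‖a - a₀‖ ≤ ε ∧
          q = ‖χ (ζ a) - χ (ζ a₀)‖ / ‖a - a₀‖}) (𝓝[>] (0 : ℝ))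
        (𝓝 ‖((fderiv ℝ χ z₀).comp Hinv).comp (ContinuousLinearMap.adjoint (fderiv ℝ φ z₀))‖) :=
  stmt_4_general Z hZ φ χ hφ hχ a₀ z₀ hz₀ hcrit H Hinv hH hHinv₁ hHinv₂
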